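/- Fix reals p > 0 and β with 0 < β < 1/2, and fix ε > 0. For each n ≥ 3 with n > p, let v_n be a natural number with v_n ≤ β² · ln(n) · log₂(n) / ln(ln(n)), and let g_n : Fin n → Finset (Fin v_n) be an arbitrary pooling design. Then for every δ > 0 there exists N such that for all n ≥ N, the probability under the Bernoulli distribution with parameter p that the number of unresolved negatives is at least n^{1−2β−ε} satisfies Σ_{P ⊆ Fin n : |closure(g_n,P) \ P| ≥ n^{1−2β−ε}} (p/n)^{|P|} · (1 − p/n)^{n−|P|} ≥ n^{−2β−δ}. -/

import Mathlib

def poolClosure {n v : ℕ} (g : Fin n → Finset (Fin v)) (P : Finset (Fin n)) :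
    Finset (Fin n) :=
  Finset.univ.filter (fun x => g x ⊆ P.biUnion g)

lemma subset_poolClosure {n v : ℕ} (g : Fin n → Finset (Fin v)) (P : Finset (Fin n)) :
    P ⊆ poolClosure g P := by
  intro z hz
  simp only [poolClosure, Finset.mem_filter, Finset.mem_univ, true_and]
  exact Finset.subset_biUnion_of_mem g hz

lemma count_small_closure {n v : ℕ} (g : Fin n → Finset (Fin v)) (K T : ℕ) :
    ((Finset.powersetCard K (Finset.univ : Finset (Fin n))).filter
        (fun P => (poolClosure g P).card < T)).card ≤ 2 ^ v * T ^ K := by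
  classical
  set s := ((Finset.powersetCard K (Finset.univ : Finset (Fin n))).filter
        (fun P => (poolClosure g P).card < T)) with hs
  have key : ∀ U ∈ s.image (fun P => P.biUnion g),
      (s.filter fun P => P.biUnion g = U).card ≤ T ^ K := by
    intro U hU
    obtain ⟨P₀, hP₀s, hP₀⟩ := Finset.mem_image.1 hU
    have hcl : (Finset.univ.filter (fun x => g x ⊆ U)).card < T := by
      have h2 := (Finset.mem_filter.1 hP₀s).2
      unfold poolClosure at h2
      rwa [hP₀] at h2
    have hsub : (s.filter fun P => P.biUnion g = U) ⊆
        Finset.powersetCard K (Finset.univ.filter (fun x => g x ⊆ U)) := by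
      intro P hP
      obtain ⟨hPs, hPU⟩ := Finset.mem_filter.1 hP
      have hPcard : P.card = K :=
        (Finset.mem_powersetCard.1 (Finset.mem_filter.1 hPs).1).2
      refine Finset.mem_powersetCard.2 ⟨?_, hPcard⟩
      intro z hz
      refine Finset.mem_filter.2 ⟨Finset.mem_univ _, ?_⟩
      rw [← hPU]
      exact Finset.subset_biUnion_of_mem g hz
    calc (s.filter fun P => P.biUnion g = U).card
        ≤ (Finset.powersetCard K (Finset.univ.filter (fun x => g x ⊆ U))).card :=
          Finset.card_le_card hsub
      _ = (Finset.univ.filter (fun x => g x ⊆ U)).card.choose K :=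
          Finset.card_powersetCard _ _
      _ ≤ (Finset.univ.filter (fun x => g x ⊆ U)).card ^ K := Nat.choose_le_pow _ _
      _ ≤ T ^ K := Nat.pow_le_pow_left (Nat.le_of_lt hcl) _
  calc s.card ≤ T ^ K * (s.image (fun P => P.biUnion g)).card :=
        Finset.card_le_mul_card_image _ _ key
    _ ≤ T ^ K * 2 ^ v := by
        gcongr
        calc (s.image (fun P => P.biUnion g)).card
            ≤ Fintype.card (Finset (Fin v)) := Finset.card_le_univ _
          _ = 2 ^ v := by simp [Fintype.card_finset]
    _ = 2 ^ v * T ^ K := mul_comm _ _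


private lemma arith1 (β L M x : ℝ) (hβ0 : 0 < β) (hβ : β < 1/2) (hL8 : 8 ≤ L)
    (hM4 : 4 ≤ M) (hx : x ≤ β*L/M + 1) : x ≤ L := by
  have hM0 : (0:ℝ) < M := by linarith
  have h1 : β*L ≤ (L/8)*M := by nlinarith
  have h2 : β*L/M ≤ L/8 := (div_le_iff₀ hM0).2 h1
  linarith

private lemma arith2 (s x l : ℝ) (hs : s*s = x) (h4 : 4 ≤ s) (hl : l/2 ≤ s - 1) :
    2*l ≤ x := by nlinarith

private lemma arith4 (β L M : ℝ) (hβ0 : 0 < β) (hβ : β < 1/2) (hL1 : 1 ≤ L)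
    (hL28 : (28/β^2)^2 ≤ L) (hMdef : M = Real.log L) : 5*M ≤ β^2*L := by
  have hL0 : (0:ℝ) < L := by linarith
  have hb2 : (0:ℝ) < β^2 := by positivity
  have hsL : (0:ℝ) ≤ Real.sqrt L := Real.sqrt_nonneg L
  have hs : (0:ℝ) ≤ Real.sqrt (Real.sqrt L) := Real.sqrt_nonneg _
  have hsq : Real.sqrt L * Real.sqrt L = L := Real.mul_self_sqrt hL0.le
  have hs2 : Real.sqrt (Real.sqrt L) * Real.sqrt (Real.sqrt L) = Real.sqrt L :=
    Real.mul_self_sqrt hsL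
  have h28 : 28/β^2 ≤ Real.sqrt L := by
    have h := Real.sqrt_le_sqrt hL28
    rwa [Real.sqrt_sq (by positivity)] at h
  have h28b : (1:ℝ) ≤ 28/β^2 := by
    rw [le_div_iff₀ hb2]; nlinarith
  have hs1 : 1 ≤ Real.sqrt (Real.sqrt L) := by nlinarith
  have hs0 : (0:ℝ) < Real.sqrt (Real.sqrt L) := by linarith
  have hM4s : M ≤ 4*Real.sqrt (Real.sqrt L) := by
    have e1 : Real.log L = 2 * Real.log (Real.sqrt L) := by
      rw [Real.log_sqrt hL0.le]; ring
    have e2 : Real.log (Real.sqrt L) = 2 * Real.log (Real.sqrt (Real.sqrt L)) := by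
      rw [Real.log_sqrt hsL]; ring
    have e3 := Real.log_le_sub_one_of_pos hs0
    rw [hMdef, e1, e2]; linarith
  have hA : 28 ≤ β^2 * Real.sqrt L := by
    calc (28:ℝ) = β^2*(28/β^2) := by field_simp
      _ ≤ β^2*Real.sqrt L := mul_le_mul_of_nonneg_left h28 hb2.le
  have hB : 28*Real.sqrt L ≤ (β^2*Real.sqrt L)*Real.sqrt L :=
    mul_le_mul_of_nonneg_right hA hsL
  have hC : (β^2*Real.sqrt L)*Real.sqrt L = β^2*L := by rw [mul_assoc, hsq]
  have hss : Real.sqrt (Real.sqrt L) ≤ Real.sqrt L := by nlinarith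
  linarith only [hB, hC, hss, hM4s, hs]

set_option maxHeartbeats 1000000 in
private lemma arith3 (β ε' L M vlg Kr : ℝ)
    (hβ0 : 0 < β) (hβ : β < 1/2) (hε' : 0 < ε')
    (hL8 : 8 ≤ L) (hM4 : 4 ≤ M) (hML : M ≤ L)
    (h5M : 5*M ≤ β^2*L)
    (hv2 : vlg ≤ β^2*L^2/M)
    (hKlow : β*L/M ≤ Kr) (hKup : Kr ≤ β*L/M + 1) (hKL : Kr ≤ L) (hK1 : 1 ≤ Kr)
    (hlogA : Real.log (Kr+2) ≤ M + 2) (hlogB : Real.log (2*Kr) ≤ M + 2)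
    (hlog4 : Real.log 4 ≤ 3) :
    Real.log 4 + vlg + Kr*Real.log (Kr+2) + Kr*Real.log (2*Kr) ≤ Kr*((2*β+ε')*L) := by
  have hM0 : (0:ℝ) < M := by linarith
  have hL0 : (0:ℝ) < L := by linarith
  have h1 : Kr*Real.log (Kr+2) ≤ Kr*(M+2) :=
    mul_le_mul_of_nonneg_left hlogA (by linarith)
  have h2 : Kr*Real.log (2*Kr) ≤ Kr*(M+2) :=
    mul_le_mul_of_nonneg_left hlogB (by linarith)
  have h3 : Kr*(M+2) ≤ (β*L/M+1)*(M+2) :=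
    mul_le_mul_of_nonneg_right hKup (by linarith)
  have h4 : (β*L/M+1)*(M+2) = β*L + 2*(β*L)/M + M + 2 := by field_simp; ring
  have hβL0 : (0:ℝ) ≤ β*L := by positivity
  have h5 : 2*(β*L)/M ≤ β*L/2 := by
    rw [div_le_div_iff₀ hM0 (by norm_num : (0:ℝ) < 2)]
    have := mul_le_mul_of_nonneg_left hM4 hβL0
    linarith [this]
  have h6 : (β*L/M)*(2*(β*L)) = 2*(β^2*L^2/M) := by field_simp
  have h7 : (β*L/M)*(2*(β*L)) ≤ Kr*(2*(β*L)) :=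
    mul_le_mul_of_nonneg_right hKlow (by positivity)
  have h8 : 0 ≤ Kr*(ε'*L) := by positivity
  have hq : 5*L ≤ β^2*L^2/M := by
    rw [le_div_iff₀ hM0]
    have := mul_le_mul_of_nonneg_right h5M hL0.le
    linarith [this]
  have hβL : β*L ≤ L/2 := by
    have := mul_nonneg (show (0:ℝ) ≤ 1/2 - β by linarith) hL0.le
    linarith [this]
  have hgoal : Kr*((2*β+ε')*L) = Kr*(2*(β*L)) + Kr*(ε'*L) := by ring
  linarith [h1, h2, h3, h4, h5, h6, h7, h8, hq, hβL, hv2, hlog4, hML, hL8, hgoal]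

private lemma arith5 (β L M Kr c p2 s y lg2 : ℝ)
    (hβ0 : 0 < β) (hL0 : 0 < L) (hM0 : 0 < M)
    (hc0 : 0 ≤ c) (hcM : 4*c + 4 ≤ M)
    (hKup : Kr ≤ β*L/M + 1) (hK0 : 0 ≤ Kr)
    (hy : y ≤ M + c)
    (hs : s*s = L) (hMs : M ≤ 2*s) (h16 : 16/(3*β) ≤ s)
    (hc'' : (8/(3*β))*(c + 2*p2 + lg2) ≤ L)
    (hlg2 : 0 ≤ lg2) (hp2 : 0 < p2) :
    Kr*y + lg2 + 2*p2 ≤ 2*β*L := by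
  have hMc : (0:ℝ) ≤ M + c := by linarith
  have hKy : Kr*y ≤ Kr*(M+c) := mul_le_mul_of_nonneg_left hy hK0
  have hKMc : Kr*(M+c) ≤ (β*L/M+1)*(M+c) := mul_le_mul_of_nonneg_right hKup hMc
  have hexp : (β*L/M+1)*(M+c) = β*L + (β*L*c)/M + M + c := by field_simp; ring
  have hβL0 : (0:ℝ) ≤ β*L := by positivity
  have h4 : (β*L*c)/M ≤ β*L/4 := by
    rw [div_le_div_iff₀ hM0 (by norm_num : (0:ℝ) < 4)]
    nlinarith [mul_le_mul_of_nonneg_left (show 4*c ≤ M by linarith) hβL0]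
  have hs0 : (0:ℝ) < s := lt_of_lt_of_le (by positivity) h16
  have h16s : 16*s ≤ 3*(β*L) := by
    have h := mul_le_mul_of_nonneg_right h16 hs0.le
    rw [hs] at h
    rw [div_mul_eq_mul_div, div_le_iff₀ (by positivity : (0:ℝ) < 3*β)] at h
    nlinarith [h]
  have h5 : 2*s ≤ (3/8)*(β*L) := by linarith
  have h6 : c + 2*p2 + lg2 ≤ (3/8)*(β*L) := by
    rw [div_mul_eq_mul_div, div_le_iff₀ (by positivity : (0:ℝ) < 3*β)] at hc''
    nlinarith [hc'']
  linarith only [hKy, hKMc, hexp, h4, h5, h6, hMs]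

private lemma arith6 (x : ℝ) (h0 : 0 ≤ x) (h2 : x ≤ 1/2) :
    Real.exp (-(2*x)) ≤ 1 - x := by
  have hmul : Real.exp (-(2*x)) * Real.exp (2*x) = 1 := by
    rw [← Real.exp_add]; norm_num
  have hge := Real.add_one_le_exp (2*x)
  have hpos := Real.exp_pos (-(2*x))
  nlinarith [hmul, hge, hpos, sq_nonneg x]

private lemma arith7 (p nn m : ℝ) (hp : 0 < p) (hnn : 0 < nn) (hm0 : 0 ≤ m)
    (hm : m ≤ nn) : -(2*p) ≤ m * (-(2*(p/nn))) := by
  have h1 : p/nn*m ≤ p/nn*nn := mul_le_mul_of_nonneg_left hm (by positivity)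
  rw [div_mul_cancel₀ _ hnn.ne'] at h1
  nlinarith [h1]

set_option maxHeartbeats 2000000 in
theorem probability_many_unresolved_negatives
    (p β ε : ℝ) (hp : 0 < p) (hβ0 : 0 < β) (hβ : β < 1 / 2) (hε : 0 < ε)
    (v : ℕ → ℕ)
    (g : ∀ n : ℕ, Fin n → Finset (Fin (v n)))
    (hv : ∀ n : ℕ, 3 ≤ n → p < n →
      (v n : ℝ) ≤ β ^ 2 * Real.log n * Real.logb 2 n / Real.log (Real.log n)) :
    ∀ δ > 0, ∃ N : ℕ, ∀ n ≥ N,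
      ∑ P ∈ Finset.univ.filter (fun P : Finset (Fin n) =>
            (n : ℝ) ^ (1 - 2 * β - ε) ≤ (((poolClosure (g n) P) \ P).card : ℝ)),
          (p / n) ^ P.card * (1 - p / n) ^ (n - P.card) ≥
        (n : ℝ) ^ (-2 * β - δ) := by
  intro δ hδ
  classical
  obtain ⟨ε', hε'def⟩ : ∃ x : ℝ, x = min ε ((1 - 2*β)/2) := ⟨_, rfl⟩
  have hε'pos : 0 < ε' := by
    rw [hε'def]; exact lt_min hε (by linarith only [hβ])
  have hε'ε : ε' ≤ ε := by rw [hε'def]; exact min_le_left _ _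
  have hε'half : ε' ≤ (1 - 2*β)/2 := by rw [hε'def]; exact min_le_right _ _
  have hexp0 : 0 ≤ 1 - 2*β - ε' := by linarith only [hε'half, hβ]
  obtain ⟨c, hcdef⟩ : ∃ x : ℝ, x = |Real.log 2 - Real.log p| := ⟨_, rfl⟩
  have hc0 : 0 ≤ c := by rw [hcdef]; exact abs_nonneg _
  have hlog2 : (0:ℝ) ≤ Real.log 2 := Real.log_nonneg one_le_two
  have hlog2' : Real.log 2 ≤ 1 := by
    have := Real.log_le_sub_one_of_pos (show (0:ℝ) < 2 by norm_num)
    linarith only [this]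
  obtain ⟨c'', hc''def⟩ : ∃ x : ℝ, x = c + 2*p + Real.log 2 := ⟨_, rfl⟩
  have hc''0 : 0 ≤ c'' := by rw [hc''def]; positivity
  obtain ⟨Cstar, hCdef⟩ : ∃ x : ℝ,
      x = 8 + (28/β^2)^2 + (16/(3*β))^2 + (8/(3*β))*c'' + Real.exp (4*c + 4) := ⟨_, rfl⟩
  refine ⟨max (max (Nat.ceil (Real.exp Cstar) + 1) (Nat.ceil (2*p) + 2)) 64, ?_⟩
  intro n hn
  have hn64 : (64:ℕ) ≤ n := le_trans (le_max_right _ _) hn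
  have hn0 : 0 < n := by omega
  have hn3 : 3 ≤ n := by omega
  have hn0R : (0:ℝ) < n := by exact_mod_cast hn0
  have hn1R : (1:ℝ) ≤ n := by exact_mod_cast hn0
  have hnN1 : Nat.ceil (Real.exp Cstar) + 1 ≤ n :=
    le_trans (le_trans (le_max_left _ _) (le_max_left _ _)) hn
  have hnN2 : Nat.ceil (2*p) + 2 ≤ n :=
    le_trans (le_trans (le_max_right _ _) (le_max_left _ _)) hn
  have hpn : 2*p + 2 ≤ (n:ℝ) := by
    have h1 : ((Nat.ceil (2*p) + 2 : ℕ) : ℝ) ≤ n := by exact_mod_cast hnN2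
    have h2 : 2*p ≤ (Nat.ceil (2*p) : ℝ) := Nat.le_ceil _
    push_cast at h1
    linarith only [h1, h2]
  have hp_n : p < (n:ℝ) := by linarith only [hpn, hp]
  have hpn2 : p/(n:ℝ) ≤ 1/2 := by
    rw [div_le_iff₀ hn0R]; linarith only [hpn]
  have hpn0 : 0 ≤ p/(n:ℝ) := by positivity
  have hpn1 : 0 ≤ 1 - p/(n:ℝ) := by linarith only [hpn2]
  obtain ⟨L, hLdef⟩ : ∃ x : ℝ, x = Real.log n := ⟨_, rfl⟩
  have hL : Cstar ≤ L := by
    have h1 : Real.exp Cstar ≤ (n:ℝ) := by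
      have h0 : ((Nat.ceil (Real.exp Cstar) + 1 : ℕ) : ℝ) ≤ n := by exact_mod_cast hnN1
      have h2 : Real.exp Cstar ≤ (Nat.ceil (Real.exp Cstar) : ℝ) := Nat.le_ceil _
      push_cast at h0
      linarith only [h0, h2]
    rw [hLdef]
    calc Cstar = Real.log (Real.exp Cstar) := (Real.log_exp _).symm
      _ ≤ Real.log n := Real.log_le_log (Real.exp_pos _) h1
  rw [hCdef] at hL
  have hsq1 : 0 ≤ (28/β^2)^2 := sq_nonneg _
  have hsq2 : 0 ≤ (16/(3*β))^2 := sq_nonneg _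
  have hsq3 : 0 ≤ (8/(3*β))*c'' := by positivity
  have hsq4 : 0 < Real.exp (4*c+4) := Real.exp_pos _
  have hL8 : 8 ≤ L := by linarith only [hL, hsq1, hsq2, hsq3, hsq4]
  have hL0 : 0 < L := by linarith only [hL8]
  have hL28 : (28/β^2)^2 ≤ L := by linarith only [hL, hsq2, hsq3, hsq4]
  have hL16 : (16/(3*β))^2 ≤ L := by linarith only [hL, hsq1, hsq3, hsq4]
  have hLc'' : (8/(3*β))*c'' ≤ L := by linarith only [hL, hsq1, hsq2, hsq4]
  have hLexp : Real.exp (4*c+4) ≤ L := by linarith only [hL, hsq1, hsq2, hsq3]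
  obtain ⟨M, hMdef⟩ : ∃ x : ℝ, x = Real.log L := ⟨_, rfl⟩
  have hM : 4*c + 4 ≤ M := by
    rw [hMdef]
    calc 4*c+4 = Real.log (Real.exp (4*c+4)) := (Real.log_exp _).symm
      _ ≤ Real.log L := Real.log_le_log (Real.exp_pos _) hLexp
  have hM4 : 4 ≤ M := by linarith only [hM, hc0]
  have hM0 : 0 < M := by linarith only [hM4]
  have hML : M ≤ L := by
    have h := Real.log_le_sub_one_of_pos hL0
    rw [← hMdef] at h
    linarith only [h]
  obtain ⟨K, hKdef⟩ : ∃ k : ℕ, k = Nat.floor (β*L/M) + 1 := ⟨_, rfl⟩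
  have hK1 : 1 ≤ K := by rw [hKdef]; exact Nat.le_add_left _ _
  have hK0R : (0:ℝ) < K := by exact_mod_cast hK1
  have hKlow : β*L/M ≤ (K:ℝ) := by
    rw [hKdef]
    have h := Nat.lt_floor_add_one (β*L/M)
    push_cast
    linarith only [h]
  have hKup : (K:ℝ) ≤ β*L/M + 1 := by
    rw [hKdef]
    have h := Nat.floor_le (show (0:ℝ) ≤ β*L/M by positivity)
    push_cast
    linarith only [h]
  have hKL : (K:ℝ) ≤ L := arith1 β L M _ hβ0 (by linarith only [hβ]) hL8 hM4 hKup
  have hKn : 2*K ≤ n := by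
    have hsn : Real.sqrt n * Real.sqrt n = (n:ℝ) := Real.mul_self_sqrt (by positivity)
    have h4s : (4:ℝ) ≤ Real.sqrt n := by
      have h16 : (4:ℝ) = Real.sqrt 16 := by
        rw [show (16:ℝ) = 4^2 by norm_num, Real.sqrt_sq (by norm_num)]
      rw [h16]
      apply Real.sqrt_le_sqrt
      have : (64:ℝ) ≤ n := by exact_mod_cast hn64
      linarith only [this]
    have hlogsqrt : Real.log (Real.sqrt n) = L/2 := by
      rw [hLdef]; exact Real.log_sqrt (by positivity)
    have h5 : Real.log (Real.sqrt n) ≤ Real.sqrt n - 1 :=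
      Real.log_le_sub_one_of_pos (by linarith only [h4s])
    have hLn : 2*L ≤ (n:ℝ) := by
      apply arith2 (Real.sqrt n) _ L hsn h4s
      linarith only [h5, hlogsqrt]
    have h6 : (2*K:ℝ) ≤ (n:ℝ) := by push_cast; linarith only [hKL, hLn]
    exact_mod_cast h6
  obtain ⟨T, hTdef⟩ : ∃ t : ℕ, t = Nat.ceil ((n:ℝ)^(1-2*β-ε')) := ⟨_, rfl⟩
  have hrpow1 : (1:ℝ) ≤ (n:ℝ)^(1-2*β-ε') := by
    have h := Real.rpow_le_rpow_of_exponent_le hn1R hexp0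
    rwa [Real.rpow_zero] at h
  have hT1 : 1 ≤ T := by
    rw [hTdef]; exact Nat.one_le_ceil_iff.2 (by linarith only [hrpow1])
  have hTlow : (n:ℝ)^(1-2*β-ε') ≤ (T:ℝ) := by rw [hTdef]; exact Nat.le_ceil _
  have hTle : (T:ℝ) ≤ 2*(n:ℝ)^(1-2*β-ε') := by
    rw [hTdef]
    have h1 : ((Nat.ceil ((n:ℝ)^(1-2*β-ε')) : ℕ):ℝ) < (n:ℝ)^(1-2*β-ε') + 1 :=
      Nat.ceil_lt_add_one (by positivity)
    linarith only [h1, hrpow1]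
    -- ==== the bad family and counting ====
  obtain ⟨Kbig, hKbigdef⟩ : ∃ s : Finset (Finset (Fin n)),
      s = Finset.powersetCard K (Finset.univ : Finset (Fin n)) := ⟨_, rfl⟩
  obtain ⟨bad, hbaddef⟩ : ∃ s : Finset (Finset (Fin n)),
      s = Kbig.filter (fun P => T + K ≤ (poolClosure (g n) P).card) := ⟨_, rfl⟩
  have hsplit : bad.card +
      (Kbig.filter (fun P => (poolClosure (g n) P).card < T + K)).card = n.choose K := by
    have h2 : Kbig.filter (fun P => ¬ (T + K ≤ (poolClosure (g n) P).card)) =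
        Kbig.filter (fun P => (poolClosure (g n) P).card < T + K) := by
      apply Finset.filter_congr; intro P _; simp [not_le]
    have h1 := Finset.card_filter_add_card_filter_not
      (s := Kbig) (p := fun P => T + K ≤ (poolClosure (g n) P).card)
    rw [h2] at h1
    rw [hbaddef, h1, hKbigdef, Finset.card_powersetCard, Finset.card_univ, Fintype.card_fin]
  have hsmallR : ((Kbig.filter (fun P => (poolClosure (g n) P).card < T + K)).card : ℝ)
      ≤ 2^(v n) * ((T:ℝ)+K)^K := by
    have h := count_small_closure (g n) K (T+K)
    rw [← hKbigdef] at h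
    calc ((Kbig.filter (fun P => (poolClosure (g n) P).card < T + K)).card : ℝ)
        ≤ ((2^(v n) * (T+K)^K : ℕ) : ℝ) := by exact_mod_cast h
      _ = 2^(v n) * ((T:ℝ)+K)^K := by push_cast; ring
  -- ==== key inequality I1 ====
  have hv2 : ((v n : ℕ):ℝ) * Real.log 2 ≤ β^2*L^2/M := by
    have hlog2pos : (0:ℝ) < Real.log 2 := Real.log_pos one_lt_two
    have h := hv n hn3 hp_n
    rw [← hLdef] at h
    rw [Real.logb] at h
    rw [← hLdef, ← hMdef] at h
    calc ((v n : ℕ):ℝ) * Real.log 2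
        ≤ (β^2*L*(L/Real.log 2)/M) * Real.log 2 :=
          mul_le_mul_of_nonneg_right h hlog2pos.le
      _ = β^2*L^2/M := by field_simp
  have h5M : 5*M ≤ β^2*L := arith4 β L M hβ0 (by linarith only [hβ]) (by linarith only [hL8])
    hL28 hMdef
  have hlogA : Real.log ((K:ℝ)+2) ≤ M + 2 := by
    have h1 : (K:ℝ)+2 ≤ 3*L := by linarith only [hKL, hL8]
    have h2 : Real.log ((K:ℝ)+2) ≤ Real.log (3*L) := Real.log_le_log (by positivity) h1
    have h3 : Real.log (3*L) = Real.log 3 + M := by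
      rw [Real.log_mul (by norm_num) hL0.ne', ← hMdef]
    have h4 : Real.log 3 ≤ 2 := by
      have := Real.log_le_sub_one_of_pos (show (0:ℝ) < 3 by norm_num)
      linarith only [this]
    linarith only [h2, h3, h4]
  have hlogB : Real.log (2*(K:ℝ)) ≤ M + 2 := by
    have h1 : 2*(K:ℝ) ≤ 3*L := by linarith only [hKL, hL8]
    have h2 : Real.log (2*(K:ℝ)) ≤ Real.log (3*L) := Real.log_le_log (by positivity) h1
    have h3 : Real.log (3*L) = Real.log 3 + M := by
      rw [Real.log_mul (by norm_num) hL0.ne', ← hMdef]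
    have h4 : Real.log 3 ≤ 2 := by
      have := Real.log_le_sub_one_of_pos (show (0:ℝ) < 3 by norm_num)
      linarith only [this]
    linarith only [h2, h3, h4]
  have hlog4 : Real.log 4 ≤ 3 := by
    have := Real.log_le_sub_one_of_pos (show (0:ℝ) < 4 by norm_num)
    linarith only [this]
  have harith := arith3 β ε' L M (((v n : ℕ):ℝ) * Real.log 2) (K:ℝ)
    hβ0 hβ hε'pos hL8 hM4 hML h5M hv2 hKlow hKup hKL (by exact_mod_cast hK1)
    hlogA hlogB hlog4
  have hlogTK : Real.log ((T:ℝ)+K) ≤ (1-2*β-ε')*L + Real.log ((K:ℝ)+2) := by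
    have hTKpos : (0:ℝ) < (T:ℝ)+K := by positivity
    have hKe : (K:ℝ)*1 ≤ (K:ℝ)*(n:ℝ)^(1-2*β-ε') :=
      mul_le_mul_of_nonneg_left hrpow1 hK0R.le
    have hring : ((K:ℝ)+2)*(n:ℝ)^(1-2*β-ε') =
        (K:ℝ)*(n:ℝ)^(1-2*β-ε') + 2*(n:ℝ)^(1-2*β-ε') := by ring
    have hTKle : (T:ℝ)+K ≤ ((K:ℝ)+2)*(n:ℝ)^(1-2*β-ε') := by
      linarith only [hTle, hKe, hring]
    have h2 : Real.log ((T:ℝ)+K) ≤ Real.log (((K:ℝ)+2)*(n:ℝ)^(1-2*β-ε')) :=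
      Real.log_le_log hTKpos hTKle
    have h3 : Real.log (((K:ℝ)+2)*(n:ℝ)^(1-2*β-ε')) =
        Real.log ((K:ℝ)+2) + (1-2*β-ε')*Real.log n := by
      rw [Real.log_mul (by positivity) (by positivity), Real.log_rpow hn0R]
    rw [← hLdef] at h3
    linarith only [h2, h3]
  have hI1 : 4 * (2:ℝ)^(v n) * ((T:ℝ)+K)^K ≤ ((n:ℝ)/(2*(K:ℝ)))^K := by
    have hlhspos : (0:ℝ) < 4 * (2:ℝ)^(v n) * ((T:ℝ)+K)^K := by positivity
    have hrhspos : (0:ℝ) < ((n:ℝ)/(2*(K:ℝ)))^K := by positivity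
    have hlogLHS : Real.log (4 * (2:ℝ)^(v n) * ((T:ℝ)+K)^K) =
        Real.log 4 + ((v n : ℕ):ℝ)*Real.log 2 + (K:ℝ)*Real.log ((T:ℝ)+K) := by
      rw [Real.log_mul (by positivity) (by positivity),
        Real.log_mul (by norm_num) (by positivity), Real.log_pow, Real.log_pow]
    have hlogRHS : Real.log (((n:ℝ)/(2*(K:ℝ)))^K) =
        (K:ℝ)*(L - Real.log (2*(K:ℝ))) := by
      rw [Real.log_pow, Real.log_div hn0R.ne' (by positivity), ← hLdef]
    have hKlogTK : (K:ℝ)*Real.log ((T:ℝ)+K) ≤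
        (K:ℝ)*((1-2*β-ε')*L + Real.log ((K:ℝ)+2)) :=
      mul_le_mul_of_nonneg_left hlogTK hK0R.le
    have hlogineq : Real.log (4 * (2:ℝ)^(v n) * ((T:ℝ)+K)^K) ≤
        Real.log (((n:ℝ)/(2*(K:ℝ)))^K) := by
      rw [hlogLHS, hlogRHS]
      linarith only [harith, hKlogTK]
    have h := Real.exp_le_exp.2 hlogineq
    rwa [Real.exp_log hlhspos, Real.exp_log hrhspos] at h
  -- ==== binomial lower bound ====
  have hchoose : ((n:ℝ)/(2*(K:ℝ)))^K ≤ (n.choose K : ℝ) := by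
    have h1 : (((n + 1 - K : ℕ) : ℝ)) ^ K / (K.factorial : ℝ) ≤ (n.choose K : ℝ) :=
      Nat.pow_le_choose K n
    have hKn1 : K ≤ n + 1 := by omega
    have h2 : (n:ℝ)/2 ≤ (((n + 1 - K : ℕ)) : ℝ) := by
      have hc : (((n + 1 - K : ℕ)) : ℝ) = (n:ℝ) + 1 - K := by
        push_cast [Nat.cast_sub hKn1]; ring
      have h2K : ((2*K : ℕ):ℝ) ≤ (n:ℝ) := by exact_mod_cast hKn
      push_cast at h2K
      rw [hc]
      linarith only [h2K]
    have h3 : (K.factorial : ℝ) ≤ (K:ℝ)^K := by exact_mod_cast Nat.factorial_le_pow K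
    have h4 : ((n:ℝ)/(2*(K:ℝ)))^K = ((n:ℝ)/2)^K / ((K:ℝ)^K) := by
      rw [← div_pow]
      congr 1
      field_simp
    rw [h4]
    calc ((n:ℝ)/2)^K / ((K:ℝ)^K)
        ≤ (((n + 1 - K : ℕ)) : ℝ)^K / (K.factorial : ℝ) := by
          apply div_le_div₀ (by positivity) (pow_le_pow_left₀ (by positivity) h2 K)
            (by exact_mod_cast K.factorial_pos) h3
      _ ≤ (n.choose K : ℝ) := h1
  have hbadR : ((n:ℝ)/(2*(K:ℝ)))^K / 2 ≤ (bad.card : ℝ) := by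
    have hcast : (bad.card:ℝ) +
        ((Kbig.filter (fun P => (poolClosure (g n) P).card < T + K)).card : ℝ)
        = (n.choose K : ℝ) := by exact_mod_cast hsplit
    linarith only [hcast, hchoose, hI1, hsmallR]
  -- ==== membership in the statement's filter ====
  have hPcardK : ∀ P ∈ bad, P.card = K := by
    intro P hP
    rw [hbaddef] at hP
    have h1 := (Finset.mem_filter.1 hP).1
    rw [hKbigdef] at h1
    exact (Finset.mem_powersetCard.1 h1).2
  have hsubset : bad ⊆ Finset.univ.filter (fun P : Finset (Fin n) =>
      (n : ℝ) ^ (1 - 2 * β - ε) ≤ (((poolClosure (g n) P) \ P).card : ℝ)) := by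
    intro P hP
    have hPcard := hPcardK P hP
    rw [hbaddef] at hP
    have hPcl := (Finset.mem_filter.1 hP).2
    refine Finset.mem_filter.2 ⟨Finset.mem_univ _, ?_⟩
    have hsub := subset_poolClosure (g n) P
    have hsd : ((poolClosure (g n) P) \ P).card = (poolClosure (g n) P).card - P.card :=
      Finset.card_sdiff_of_subset hsub
    have hTge : T ≤ ((poolClosure (g n) P) \ P).card := by omega
    calc (n:ℝ)^(1-2*β-ε) ≤ (n:ℝ)^(1-2*β-ε') :=
          Real.rpow_le_rpow_of_exponent_le hn1R (by linarith only [hε'ε])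
      _ ≤ (T:ℝ) := hTlow
      _ ≤ (((poolClosure (g n) P) \ P).card : ℝ) := by exact_mod_cast hTge
  -- ==== lower-bounding the sum ====
  have hsum_ge : (bad.card : ℝ) * ((p/(n:ℝ))^K * (1-p/(n:ℝ))^(n-K)) ≤
      ∑ P ∈ Finset.univ.filter (fun P : Finset (Fin n) =>
          (n : ℝ) ^ (1 - 2 * β - ε) ≤ (((poolClosure (g n) P) \ P).card : ℝ)),
        (p / (n:ℝ)) ^ P.card * (1 - p / (n:ℝ)) ^ (n - P.card) := by
    have h1 : ∑ P ∈ bad, (p/(n:ℝ))^P.card * (1-p/(n:ℝ))^(n-P.card)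
        = (bad.card:ℝ) * ((p/(n:ℝ))^K * (1-p/(n:ℝ))^(n-K)) := by
      calc ∑ P ∈ bad, (p/(n:ℝ))^P.card * (1-p/(n:ℝ))^(n-P.card)
          = ∑ _P ∈ bad, (p/(n:ℝ))^K * (1-p/(n:ℝ))^(n-K) := by
            apply Finset.sum_congr rfl
            intro P hP
            rw [hPcardK P hP]
        _ = (bad.card:ℝ) * ((p/(n:ℝ))^K * (1-p/(n:ℝ))^(n-K)) := by
            rw [Finset.sum_const, nsmul_eq_mul]
    rw [← h1]
    apply Finset.sum_le_sum_of_subset_of_nonneg hsubset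
    intro P _ _
    positivity
  -- ==== final numeric lower bound ====
  have hApow : Real.exp (-(2*p)) ≤ (1-p/(n:ℝ))^(n-K) := by
    have hx := arith6 (p/(n:ℝ)) hpn0 hpn2
    have hm : ((n - K : ℕ):ℝ) ≤ (n:ℝ) := by exact_mod_cast Nat.sub_le n K
    have hm0 : (0:ℝ) ≤ ((n-K:ℕ):ℝ) := Nat.cast_nonneg _
    have h1 : Real.exp (-(2*p)) ≤ Real.exp (((n-K:ℕ):ℝ) * (-(2*(p/(n:ℝ))))) :=
      Real.exp_le_exp.2 (arith7 p (n:ℝ) ((n-K:ℕ):ℝ) hp hn0R hm0 hm)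
    have h2 : Real.exp (((n-K:ℕ):ℝ) * (-(2*(p/(n:ℝ))))) =
        (Real.exp (-(2*(p/(n:ℝ)))))^(n-K) := Real.exp_nat_mul _ _
    have h3 : (Real.exp (-(2*(p/(n:ℝ)))))^(n-K) ≤ (1-p/(n:ℝ))^(n-K) :=
      pow_le_pow_left₀ (Real.exp_pos _).le hx _
    calc Real.exp (-(2*p)) ≤ Real.exp (((n-K:ℕ):ℝ) * (-(2*(p/(n:ℝ))))) := h1
      _ = (Real.exp (-(2*(p/(n:ℝ)))))^(n-K) := h2
      _ ≤ (1-p/(n:ℝ))^(n-K) := h3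
  have hI2 : (n:ℝ)^(-2*β) ≤ (p/(2*(K:ℝ)))^K * Real.exp (-(2*p)) / 2 := by
    have hpk : (0:ℝ) < p/(2*(K:ℝ)) := by positivity
    have hy : Real.log (2*(K:ℝ)) - Real.log p ≤ M + c := by
      have h2K : 2*(K:ℝ) ≤ 2*L := by linarith only [hKL]
      have hlog2K : Real.log (2*(K:ℝ)) ≤ Real.log (2*L) :=
        Real.log_le_log (by positivity) h2K
      have hlog2L : Real.log (2*L) = Real.log 2 + M := by
        rw [Real.log_mul two_ne_zero hL0.ne', ← hMdef]
      have hcabs : Real.log 2 - Real.log p ≤ c := by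
        rw [hcdef]; exact le_abs_self _
      linarith only [hlog2K, hlog2L, hcabs]
    have hsqL : Real.sqrt L * Real.sqrt L = L := Real.mul_self_sqrt hL0.le
    have hMs : M ≤ 2*Real.sqrt L := by
      have e1 : Real.log (Real.sqrt L) = Real.log L / 2 := Real.log_sqrt hL0.le
      have hsL0 : (0:ℝ) < Real.sqrt L := Real.sqrt_pos.2 hL0
      have e2 := Real.log_le_sub_one_of_pos hsL0
      rw [hMdef]
      linarith only [e1, e2]
    have h16 : 16/(3*β) ≤ Real.sqrt L := by
      have h := Real.sqrt_le_sqrt hL16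
      rwa [Real.sqrt_sq (by positivity)] at h
    have hc''L : (8/(3*β))*(c + 2*p + Real.log 2) ≤ L := by
      rw [← hc''def]; exact hLc''
    have harith5 := arith5 β L M (K:ℝ) c p (Real.sqrt L)
      (Real.log (2*(K:ℝ)) - Real.log p) (Real.log 2)
      hβ0 hL0 hM0 hc0 hM hKup hK0R.le hy hsqL hMs h16 hc''L hlog2 hp
    have hexponent : Real.log (n:ℝ) * (-2*β) ≤
        (K:ℝ) * Real.log (p/(2*(K:ℝ))) + (-(2*p) - Real.log 2) := by
      have hld : Real.log (p/(2*(K:ℝ))) = Real.log p - Real.log (2*(K:ℝ)) :=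
        Real.log_div hp.ne' (by positivity)
      rw [hld, ← hLdef]
      linarith only [harith5]
    have e1 : (p/(2*(K:ℝ)))^K = Real.exp ((K:ℝ) * Real.log (p/(2*(K:ℝ)))) := by
      conv_lhs => rw [← Real.exp_log hpk]
      rw [← Real.exp_nat_mul]
    have e2 : (n:ℝ)^(-2*β) = Real.exp (Real.log (n:ℝ) * (-2*β)) :=
      Real.rpow_def_of_pos hn0R _
    have e3 : (p/(2*(K:ℝ)))^K * Real.exp (-(2*p)) / 2 =
        Real.exp ((K:ℝ) * Real.log (p/(2*(K:ℝ))) + (-(2*p) - Real.log 2)) := by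
      rw [e1, ← Real.exp_add]
      rw [show (K:ℝ) * Real.log (p/(2*(K:ℝ))) + (-(2*p) - Real.log 2) =
        ((K:ℝ) * Real.log (p/(2*(K:ℝ))) + -(2*p)) - Real.log 2 by ring]
      rw [Real.exp_sub, Real.exp_log (by norm_num : (0:ℝ) < 2)]
    rw [e2, e3]
    exact Real.exp_le_exp.2 hexponent
  have hB2 : ((n:ℝ)/(2*(K:ℝ)))^K * (p/(n:ℝ))^K = (p/(2*(K:ℝ)))^K := by
    rw [← mul_pow]
    congr 1
    field_simp
  have hfinal : (n:ℝ)^(-2*β) ≤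
      (bad.card:ℝ) * ((p/(n:ℝ))^K * (1-p/(n:ℝ))^(n-K)) := by
    have hstep : ((n:ℝ)/(2*(K:ℝ)))^K / 2 * ((p/(n:ℝ))^K * Real.exp (-(2*p))) ≤
        (bad.card:ℝ) * ((p/(n:ℝ))^K * (1-p/(n:ℝ))^(n-K)) := by
      apply mul_le_mul hbadR ?_ (by positivity) (Nat.cast_nonneg _)
      exact mul_le_mul_of_nonneg_left hApow (by positivity)
    have hval : ((n:ℝ)/(2*(K:ℝ)))^K / 2 * ((p/(n:ℝ))^K * Real.exp (-(2*p))) =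
        (p/(2*(K:ℝ)))^K * Real.exp (-(2*p)) / 2 := by
      rw [show ((n:ℝ)/(2*(K:ℝ)))^K / 2 * ((p/(n:ℝ))^K * Real.exp (-(2*p))) =
        (((n:ℝ)/(2*(K:ℝ)))^K * (p/(n:ℝ))^K) * Real.exp (-(2*p)) / 2 by ring, hB2]
    rw [hval] at hstep
    linarith only [hI2, hstep]
  -- ==== conclusion ====
  rw [ge_iff_le]
  calc (n:ℝ)^(-2*β-δ) ≤ (n:ℝ)^(-2*β) :=
        Real.rpow_le_rpow_of_exponent_le hn1R (by linarith only [hδ])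
    _ ≤ (bad.card:ℝ) * ((p/(n:ℝ))^K * (1-p/(n:ℝ))^(n-K)) := hfinal
    _ ≤ _ := hsum_ge
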